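/- If two solutions (x_1,x_2) and (y_1,y_2) in (K*)^2 of a_1x_1 + a_2x_2 = 1 both satisfy a_1x_1/(a_2x_2) ∈ k* and a_1y_1/(a_2y_2) ∈ k*, then they lie in the same (k*)^2-coset, i.e., (x_1/y_1, x_2/y_2) ∈ (k*)^2. Conversely, if (x_1,x_2) and (y_1,y_2) are distinct solutions lying in the same (k*)^2-coset, then a_1x_1/(a_2x_2) ∈ k*. -/

import Mathlib

/-!
With `u = a₁x₁`, `v = a₂x₂` and `t = u / v`, the equation `u + v = 1` gives `v = 1 / (1 + t)` and
`u = t v`, so each coordinate of a solution is a rational function of `t` over `k`, and the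
coordinate ratios of two solutions lie in `k` once both values of `t` do. Conversely, if
`x = (c y₁, d y₂)` with `c, d ∈ k`, subtracting the two equations gives
`(c - 1) a₁y₁ = (1 - d) a₂y₂`; so `c ≠ 1` unless the solutions coincide, and then
`a₁y₁ / (a₂y₂) = (1 - d) / (c - 1) ∈ k`, whence `a₁x₁ / (a₂x₂) = (c / d) (a₁y₁ / (a₂y₂)) ∈ k`.
-/

section

variable {K : Type*} [Field K]

theorem one_add_div_eq_inv_of_add_eq_one {u v : K} (hv : v ≠ 0) (h : u + v = 1) :
    1 + u / v = v⁻¹ := by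
  field_simp
  linear_combination h

theorem ne_one_of_add_eq_one_of_mul_add_mul_eq_one {u v c d : K} (hv : v ≠ 0) (h : u + v = 1)
    (h' : c * u + d * v = 1) (hcd : (c, d) ≠ (1, 1)) : c ≠ 1 := by
  rintro rfl
  have hd : d * v = v := by linear_combination h' - h
  exact hcd (Prod.ext rfl ((mul_eq_right₀ hv).1 hd))

theorem div_eq_of_add_eq_one_of_mul_add_mul_eq_one {u v c d : K} (hv : v ≠ 0) (hc : c ≠ 1)
    (h : u + v = 1) (h' : c * u + d * v = 1) : u / v = (1 - d) / (c - 1) := by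
  rw [div_eq_div_iff hv (sub_ne_zero.2 hc)]
  linear_combination h' - h

namespace Subfield

variable (k : Subfield K)

theorem div_mem_of_div_mem_of_add_eq_one {u v u' v' : K} (hv : v ≠ 0) (hv' : v' ≠ 0)
    (h : u + v = 1) (h' : u' + v' = 1) (ht : u / v ∈ k) (ht' : u' / v' ∈ k) :
    u / u' ∈ k ∧ v / v' ∈ k := by
  have hvv' : v / v' ∈ k := by
    rw [← inv_div_inv, ← one_add_div_eq_inv_of_add_eq_one hv h,
      ← one_add_div_eq_inv_of_add_eq_one hv' h']
    exact k.div_mem (k.add_mem k.one_mem ht') (k.add_mem k.one_mem ht)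
  have huu' : u / u' = (u / v) / (u' / v') * (v / v') := by
    conv_lhs => rw [← div_mul_cancel₀ u hv, ← div_mul_cancel₀ u' hv']
    exact mul_div_mul_comm _ _ _ _
  exact ⟨huu' ▸ k.mul_mem (k.div_mem ht ht') hvv', hvv'⟩

theorem mul_div_mul_mem_of_add_eq_one {u v c d : K} (hv : v ≠ 0) (h : u + v = 1)
    (h' : c * u + d * v = 1) (hcd : (c, d) ≠ (1, 1)) (hc : c ∈ k) (hd : d ∈ k) :
    c * u / (d * v) ∈ k := by
  have hc₁ := ne_one_of_add_eq_one_of_mul_add_mul_eq_one hv h h' hcd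
  rw [mul_div_mul_comm, div_eq_of_add_eq_one_of_mul_add_mul_eq_one hv hc₁ h h']
  exact k.mul_mem (k.div_mem hc hd) (k.div_mem (k.sub_mem k.one_mem hd) (k.sub_mem hc k.one_mem))

end Subfield

end

theorem two_variable_cosets_general {K : Type*} [Field K] (k : Subfield K)
    (a₁ a₂ : K) (ha₁ : a₁ ≠ 0) (ha₂ : a₂ ≠ 0)
    (x₁ x₂ y₁ y₂ : K) (hx₂ : x₂ ≠ 0) (hy₁ : y₁ ≠ 0) (hy₂ : y₂ ≠ 0)
    (hx : a₁ * x₁ + a₂ * x₂ = 1) (hy : a₁ * y₁ + a₂ * y₂ = 1) :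
    (((a₁ * x₁) / (a₂ * x₂) ∈ k ∧ (a₁ * y₁) / (a₂ * y₂) ∈ k) →
      (x₁ / y₁ ∈ k ∧ x₂ / y₂ ∈ k)) ∧
    (((x₁, x₂) ≠ (y₁, y₂) ∧ x₁ / y₁ ∈ k ∧ x₂ / y₂ ∈ k) →
      (a₁ * x₁) / (a₂ * x₂) ∈ k) := by
  constructor
  · rintro ⟨ht, hs⟩
    rw [← mul_div_mul_left x₁ y₁ ha₁, ← mul_div_mul_left x₂ y₂ ha₂]
    exact k.div_mem_of_div_mem_of_add_eq_one (mul_ne_zero ha₂ hx₂) (mul_ne_zero ha₂ hy₂) hx hy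
      ht hs
  · rintro ⟨hne, hc, hd⟩
    have e₁ : a₁ * x₁ = x₁ / y₁ * (a₁ * y₁) := by field_simp
    have e₂ : a₂ * x₂ = x₂ / y₂ * (a₂ * y₂) := by field_simp
    have hcd : (x₁ / y₁, x₂ / y₂) ≠ (1, 1) := by
      simpa only [ne_eq, Prod.mk.injEq, div_eq_one_iff_eq hy₁, div_eq_one_iff_eq hy₂] using hne
    rw [e₁, e₂] at hx ⊢
    exact k.mul_div_mul_mem_of_add_eq_one (mul_ne_zero ha₂ hy₂) hy hx hcd hc hd

/-- Solutions of a₁x₁+a₂x₂ = 1 with a₁x₁/(a₂x₂) ∈ k* lie in one (k*)²-coset; conversely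
distinct solutions in a common (k*)²-coset have a₁x₁/(a₂x₂) ∈ k*. -/
theorem two_variable_cosets {K : Type*} [Field K] [CharZero K] (k : Subfield K)
    (a₁ a₂ : K) (ha₁ : a₁ ≠ 0) (ha₂ : a₂ ≠ 0)
    (x₁ x₂ y₁ y₂ : K) (hx₁ : x₁ ≠ 0) (hx₂ : x₂ ≠ 0) (hy₁ : y₁ ≠ 0) (hy₂ : y₂ ≠ 0)
    (hx : a₁ * x₁ + a₂ * x₂ = 1) (hy : a₁ * y₁ + a₂ * y₂ = 1) :
    (((a₁ * x₁) / (a₂ * x₂) ∈ k ∧ (a₁ * y₁) / (a₂ * y₂) ∈ k) →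
      (x₁ / y₁ ∈ k ∧ x₂ / y₂ ∈ k)) ∧
    (((x₁, x₂) ≠ (y₁, y₂) ∧ x₁ / y₁ ∈ k ∧ x₂ / y₂ ∈ k) →
      (a₁ * x₁) / (a₂ * x₂) ∈ k) :=
  two_variable_cosets_general k a₁ a₂ ha₁ ha₂ x₁ x₂ y₁ y₂ hx₂ hy₁ hy₂ hx hy
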